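/- arXiv:1704.00748 — 2 statements merged into one kernel-verified Lean document; each statement's English description precedes it below -/
import Mathlib

section
/- δ̄(x)/x → 2 as x → ∞; that is, the function δ̄ grows asymptotically linearly with slope 2. -/
open Filter

/-- Corollary 2 of the paper: the function `δ̄` (implicitly defined by
`δ̄(γ) = 2γ + 1 + log δ̄(γ)`, `δ̄(γ) ≥ 1`) grows asymptotically linearly with
slope `2`, i.e. `δ̄(x)/x → 2` as `x → ∞`. -/
theorem deltaBar_linear_growth
    (f : ℝ → ℝ) (hf : ∀ γ : ℝ, 0 ≤ γ → 1 ≤ f γ ∧ f γ = 2 * γ + 1 + Real.log (f γ)) :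
    Tendsto (fun x : ℝ => f x / x) atTop (nhds 2) := by
  have hlog : ∀ y : ℝ, 1 ≤ y → Real.log y ≤ y / 2 := by
    intro y hy
    have hy0 : (0:ℝ) < y := by linarith
    have hs := Real.log_le_sub_one_of_pos (Real.sqrt_pos.mpr hy0)
    rw [Real.log_sqrt hy0.le] at hs
    have h2 : Real.sqrt y ≤ y / 4 + 1 := by
      nlinarith [sq_nonneg (Real.sqrt y - 2), Real.sq_sqrt hy0.le, Real.sqrt_nonneg y]
    linarith
  have hub : ∀ x : ℝ, 0 ≤ x → f x ≤ 4 * x + 2 := by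
    intro x hx
    obtain ⟨h1, heq⟩ := hf x hx
    have := hlog (f x) h1
    linarith
  have hlb : ∀ x : ℝ, 0 ≤ x → 2 * x + 1 ≤ f x := by
    intro x hx
    obtain ⟨h1, heq⟩ := hf x hx
    have := Real.log_nonneg h1
    linarith
  have hg : Tendsto (fun x : ℝ => 2 + 1 / x) atTop (nhds 2) := by
    have h0 : Tendsto (fun x : ℝ => 1 / x) atTop (nhds 0) := by
      simpa [one_div] using (tendsto_inv_atTop_zero : Tendsto (fun x : ℝ => x⁻¹) atTop (nhds 0))
    simpa using (tendsto_const_nhds.add h0 : Tendsto (fun x : ℝ => 2 + 1 / x) atTop (nhds (2 + 0)))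
  -- upper comparison function
  have h4 : Tendsto (fun x : ℝ => 4 * x + 2) atTop atTop :=
    tendsto_atTop_add_const_right _ 2 (tendsto_id.const_mul_atTop (by norm_num))
  have hlittle : (fun x : ℝ => 1 + Real.log (4 * x + 2)) =o[atTop] (fun x : ℝ => x) := by
    have h1 : (fun x : ℝ => Real.log (4 * x + 2)) =o[atTop] (fun x : ℝ => 4 * x + 2) :=
      Real.isLittleO_log_id_atTop.comp_tendsto h4
    have h2 : (fun x : ℝ => 4 * x + 2) =O[atTop] (fun x : ℝ => x) := by
      apply Asymptotics.IsBigO.of_bound 6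
      filter_upwards [eventually_ge_atTop (1:ℝ)] with x hx
      rw [Real.norm_eq_abs, Real.norm_eq_abs, abs_of_nonneg (by linarith : (0:ℝ) ≤ 4*x+2), abs_of_nonneg (by linarith : (0:ℝ) ≤ x)]
      linarith
    have h3 : (fun _ : ℝ => (1:ℝ)) =o[atTop] (fun x : ℝ => x) :=
      Asymptotics.isLittleO_const_id_atTop 1
    exact h3.add (h1.trans_isBigO h2)
  have hh : Tendsto (fun x : ℝ => 2 + (1 + Real.log (4 * x + 2)) / x) atTop (nhds 2) := by
    have := hlittle.tendsto_div_nhds_zero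
    simpa using (tendsto_const_nhds.add this :
      Tendsto (fun x : ℝ => 2 + (1 + Real.log (4 * x + 2)) / x) atTop (nhds (2 + 0)))
  refine tendsto_of_tendsto_of_tendsto_of_le_of_le' hg hh ?_ ?_
  · filter_upwards [eventually_ge_atTop (1:ℝ)] with x hx
    have hx0 : (0:ℝ) < x := by linarith
    rw [le_div_iff₀ hx0]
    have hxne : x ≠ 0 := ne_of_gt hx0
    have heq2 : (2 + 1 / x) * x = 2 * x + 1 := by field_simp
    rw [heq2]
    exact hlb x (by linarith)
  · filter_upwards [eventually_ge_atTop (1:ℝ)] with x hx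
    have hx0 : (0:ℝ) < x := by linarith
    obtain ⟨h1, heq⟩ := hf x (by linarith)
    have hmon : Real.log (f x) ≤ Real.log (4 * x + 2) :=
      Real.log_le_log (by linarith) (hub x (by linarith))
    rw [div_le_iff₀ hx0]
    have hexp : (2 + (1 + Real.log (4 * x + 2)) / x) * x
        = 2 * x + 1 + Real.log (4 * x + 2) := by field_simp; ring
    rw [hexp]
    linarith
end

section
/- Let F = ℝ(X) be the field of rational functions over ℝ, and let A, K be real matrices of sizes n×n and n×p, B a real n×m matrix, and C a real p×n matrix, viewed entrywise as matrices over F. Then the matrices X·I_n − A and X·I_n − (A − K·C) are invertible over F, the p×p matrix I_p + C·(X·I_n − A)⁻¹·K is invertible over F, and if the transfer matrix G = C·(X·I_n − A)⁻¹·B has a right inverse over F (an m×p matrix H over F with G·H = I_p), then the transfer matrix G′ = C·(X·I_n − (A − K·C))⁻¹·B of the output-injected system also has a right inverse over F. -/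
open Matrix

/-- A real matrix viewed entrywise as a matrix over the field `ℝ(X)` of rational
functions. -/
noncomputable def toRatFuncMatrix {n m : ℕ} (A : Matrix (Fin n) (Fin m) ℝ) :
    Matrix (Fin n) (Fin m) (RatFunc ℝ) :=
  A.map (algebraMap ℝ (RatFunc ℝ))

/-- The matrix `X · I_n` over `ℝ(X)`. -/
noncomputable def XI (n : ℕ) : Matrix (Fin n) (Fin n) (RatFunc ℝ) :=
  Matrix.scalar (Fin n) (RatFunc.X : RatFunc ℝ)

open Polynomial in
lemma det_XI_sub_isUnit {n : ℕ} (A : Matrix (Fin n) (Fin n) ℝ) :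
    IsUnit (XI n - toRatFuncMatrix A).det := by
  have h : XI n - toRatFuncMatrix A
      = (charmatrix A).map (algebraMap ℝ[X] (RatFunc ℝ)) := by
    ext i j
    by_cases hij : i = j <;>
      simp [XI, toRatFuncMatrix, charmatrix, hij, Matrix.scalar_apply,
        IsScalarTower.algebraMap_apply ℝ ℝ[X] (RatFunc ℝ), algebraMap_eq]
  rw [h]
  have hd : ((charmatrix A).map (algebraMap ℝ[X] (RatFunc ℝ))).det
      = algebraMap ℝ[X] (RatFunc ℝ) A.charpoly := by
    rw [show (charmatrix A).map (algebraMap ℝ[X] (RatFunc ℝ))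
        = (algebraMap ℝ[X] (RatFunc ℝ)).mapMatrix (charmatrix A) from rfl,
      ← RingHom.map_det]
    rfl
  rw [hd]
  have : A.charpoly ≠ 0 := A.charpoly_monic.ne_zero
  rw [isUnit_iff_ne_zero]
  intro hc
  exact this (by
    apply IsFractionRing.injective ℝ[X] (RatFunc ℝ)
    simpa using hc)

/-- Lemma 5 of the paper: over the field `F = ℝ(X)`, the matrices `XI - A` and
`XI - (A - KC)` are invertible, the matrix `I_p + C (XI - A)⁻¹ K` is invertible,
and if the transfer matrix `G = C (XI - A)⁻¹ B` has a right inverse over `F`,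
then so does the transfer matrix `G' = C (XI - (A - KC))⁻¹ B` of the
output-injected system. -/
theorem right_invertible_output_injection {n p m : ℕ}
    (A : Matrix (Fin n) (Fin n) ℝ) (K : Matrix (Fin n) (Fin p) ℝ)
    (B : Matrix (Fin n) (Fin m) ℝ) (C : Matrix (Fin p) (Fin n) ℝ) :
    IsUnit (XI n - toRatFuncMatrix A).det ∧
    IsUnit (XI n - toRatFuncMatrix (A - K * C)).det ∧
    IsUnit ((1 : Matrix (Fin p) (Fin p) (RatFunc ℝ)) +
      toRatFuncMatrix C * (XI n - toRatFuncMatrix A)⁻¹ * toRatFuncMatrix K).det ∧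
    ((∃ H : Matrix (Fin m) (Fin p) (RatFunc ℝ),
        toRatFuncMatrix C * (XI n - toRatFuncMatrix A)⁻¹ * toRatFuncMatrix B * H = 1) →
      ∃ H' : Matrix (Fin m) (Fin p) (RatFunc ℝ),
        toRatFuncMatrix C * (XI n - toRatFuncMatrix (A - K * C))⁻¹ *
          toRatFuncMatrix B * H' = 1) := by
  set A' := toRatFuncMatrix A with hA'
  set K' := toRatFuncMatrix K with hK'
  set B' := toRatFuncMatrix B with hB'
  set C' := toRatFuncMatrix C with hC'
  have hA : IsUnit (XI n - A').det := det_XI_sub_isUnit A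
  have hA2 : IsUnit (XI n - toRatFuncMatrix (A - K * C)).det := det_XI_sub_isUnit _
  set M := (XI n - A')⁻¹ with hM
  have hmap : toRatFuncMatrix (A - K * C) = A' - K' * C' := by
    simp [toRatFuncMatrix, Matrix.map_sub, Matrix.map_mul, hA', hK', hC']
  set T := (1 : Matrix (Fin n) (Fin n) (RatFunc ℝ)) + M * (K' * C') with hT
  set S := (1 : Matrix (Fin p) (Fin p) (RatFunc ℝ)) + C' * M * K' with hS
  have hfact : XI n - toRatFuncMatrix (A - K * C) = (XI n - A') * T := by
    rw [hmap, hT, mul_add, mul_one, ← mul_assoc, Matrix.mul_nonsing_inv _ hA, one_mul]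
    abel
  have hdet : (XI n - toRatFuncMatrix (A - K * C)).det = (XI n - A').det * T.det := by
    rw [hfact, Matrix.det_mul]
  have hTdet : IsUnit T.det := by
    rw [isUnit_iff_ne_zero] at hA hA2 ⊢
    intro h
    rw [hdet, h, mul_zero] at hA2
    exact hA2 rfl
  have hSdet : IsUnit S.det := by
    have hST : S.det = T.det := by
      rw [hS, hT, Matrix.det_one_add_mul_comm, ← Matrix.mul_assoc, Matrix.det_one_add_mul_comm]
    rw [hST]; exact hTdet
  refine ⟨hA, hA2, hSdet, ?_⟩
  rintro ⟨H, hH⟩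
  refine ⟨H * S, ?_⟩
  have hinv : (XI n - toRatFuncMatrix (A - K * C))⁻¹ = T⁻¹ * M := by
    rw [hfact, Matrix.mul_inv_rev]
  have h1 : S * C' = C' * T := by
    rw [hS, hT]
    simp only [Matrix.add_mul, Matrix.mul_add, Matrix.one_mul, Matrix.mul_one, Matrix.mul_assoc]
  have hpush : C' * T⁻¹ = S⁻¹ * C' := by
    calc C' * T⁻¹ = (S⁻¹ * S) * (C' * T⁻¹) := by
          rw [Matrix.nonsing_inv_mul _ hSdet, Matrix.one_mul]
      _ = S⁻¹ * (S * C') * T⁻¹ := by simp only [Matrix.mul_assoc]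
      _ = S⁻¹ * (C' * T) * T⁻¹ := by rw [h1]
      _ = S⁻¹ * C' * (T * T⁻¹) := by simp only [Matrix.mul_assoc]
      _ = S⁻¹ * C' := by rw [Matrix.mul_nonsing_inv _ hTdet, Matrix.mul_one]
  rw [hinv]
  have e1 : C' * (T⁻¹ * M) * B' * (H * S) = (C' * T⁻¹) * M * B' * H * S := by
    simp only [Matrix.mul_assoc]
  rw [e1, hpush]
  have e2 : S⁻¹ * C' * M * B' * H * S = S⁻¹ * (C' * M * B' * H) * S := by
    simp only [Matrix.mul_assoc]
  rw [e2, hH, Matrix.mul_one, Matrix.nonsing_inv_mul _ hSdet]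
end
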